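/- Let S be a type, R a commutative ring, and q : S → R. For a finitely supported function D : S →₀ ℕ define r(D) = ∏_{x ∈ supp(D)} (1 − q(x)) and w(D) = ∏_{x ∈ supp(D)} q(x)^{D(x)}. Then for every D : S →₀ ℕ one has Σ_{(D₁,D₂) : D₁ + D₂ = D} r(D₁)·w(D₂) = 1 (the sum taken over the antidiagonal of D). (The convolution identity underlying formula (5.10) of the paper: β ∗ 𝔏₁ = q^{g−1}𝔏₀, i.e. convolving Schieder's r with 𝔏₁ gives 𝔏₀.) -/

import Mathlib

/-!
Both `r` and `w` are multiplicative over the points of `supp D`, so the convolution factors as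
the product over `x` of local sums `∑_{i + j = D x} r_x(i) q_x ^ j`, where `r_x(0) = 1` and
`r_x(i) = 1 - q_x` for `i > 0`. Each local sum telescopes:
`(1 - q)(1 + q + ⋯ + q^(n-1)) + q^n = 1`. Formally, we induct on `D`, splitting off one point
at a time.
-/

open Finset Finsupp

lemma Nat.sum_antidiagonal_ite_one_sub_mul_pow {R : Type*} [Ring R] (u : R) (n : ℕ) :
    ∑ p ∈ antidiagonal n, (if p.1 = 0 then 1 else 1 - u) * u ^ p.2 = 1 := by
  induction n with
  | zero => simp
  | succ n ih =>
    rw [Nat.sum_antidiagonal_succ']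
    simp only [pow_succ, ← mul_assoc, ← Finset.sum_mul, ih, Nat.add_one_ne_zero, if_false]
    noncomm_ring

namespace Finsupp

variable {S : Type*}

lemma prod_support_single {N : Type*} [CommMonoid N] (c : S → N) (a : S) (i : ℕ) :
    ∏ x ∈ (single a i).support, c x = if i = 0 then 1 else c a := by
  split_ifs with hi
  · simp [hi]
  · rw [support_single a hi, prod_singleton]

lemma prod_support_single_add {N : Type*} [CommMonoid N] [DecidableEq S] (c : S → N)
    {a : S} {f : S →₀ ℕ} (ha : f a = 0) (i : ℕ) :
    ∏ x ∈ (single a i + f).support, c x = (if i = 0 then 1 else c a) * ∏ x ∈ f.support, c x := by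
  have hd : Disjoint (single a i).support f.support := by
    refine disjoint_left.mpr fun x hx hfx => ?_
    rw [mem_singleton.mp (support_single_subset hx)] at hfx
    exact mem_support_iff.mp hfx ha
  rw [support_add_eq hd, prod_union hd, prod_support_single]

lemma prod_support_pow_single_add {M : Type*} [CommMonoid M] (q : S → M) (a : S) (j : ℕ)
    (f : S →₀ ℕ) :
    ∏ x ∈ (single a j + f).support, q x ^ (single a j + f) x
      = q a ^ j * ∏ x ∈ f.support, q x ^ f x := by
  change (single a j + f).prod (fun x k => q x ^ k) = q a ^ j * f.prod (fun x k => q x ^ k)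
  rw [prod_add_index' (fun _ => pow_zero _) fun _ => pow_add _,
    prod_single_index (h := fun x k => q x ^ k) (pow_zero _)]

lemma erase_single_add {M : Type*} [AddZeroClass M] {a : S} {f : S →₀ M} (ha : f a = 0)
    (b : M) : (single a b + f).erase a = f := by
  rw [erase_add, erase_single, zero_add, erase_of_notMem_support (notMem_support_iff.mpr ha)]

variable [DecidableEq S]

lemma apply_eq_zero_of_mem_antidiagonal {a : S} {f : S →₀ ℕ} (ha : f a = 0)
    {P : (S →₀ ℕ) × (S →₀ ℕ)} (hP : P ∈ antidiagonal f) : P.1 a = 0 ∧ P.2 a = 0 := by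
  have := DFunLike.congr_fun (mem_antidiagonal.mp hP) a
  simp only [coe_add, Pi.add_apply, ha] at this
  omega

lemma sum_antidiagonal_single_add {M : Type*} [AddCommMonoid M]
    (F : (S →₀ ℕ) × (S →₀ ℕ) → M) {a : S} {f : S →₀ ℕ} (ha : f a = 0) (n : ℕ) :
    ∑ P ∈ antidiagonal (single a n + f), F P
      = ∑ p ∈ antidiagonal n, ∑ P ∈ antidiagonal f,
          F (single a p.1 + P.1, single a p.2 + P.2) := by
  rw [← sum_product']
  refine sum_nbij' (fun P => ((P.1 a, P.2 a), (P.1.erase a, P.2.erase a)))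
    (fun Q => (single a Q.1.1 + Q.2.1, single a Q.1.2 + Q.2.2)) ?_ ?_ ?_ ?_ ?_
  · rintro ⟨P₁, P₂⟩ hP
    have hsum : P₁ + P₂ = single a n + f := mem_antidiagonal.mp hP
    have hval := DFunLike.congr_fun hsum a
    simp only [coe_add, Pi.add_apply, single_eq_same, ha, add_zero] at hval
    have herase := congr_arg (erase a) hsum
    rw [erase_add, erase_single_add ha] at herase
    simp [HasAntidiagonal.mem_antidiagonal, hval, herase]
  · rintro ⟨⟨i, j⟩, ⟨g₁, g₂⟩⟩ hQ
    simp only [mem_product, HasAntidiagonal.mem_antidiagonal] at hQ ⊢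
    rw [← hQ.1, ← hQ.2, single_add]
    abel
  · rintro ⟨P₁, P₂⟩ -
    simp only [single_add_erase]
  · rintro ⟨⟨i, j⟩, ⟨g₁, g₂⟩⟩ hQ
    obtain ⟨h₁, h₂⟩ := apply_eq_zero_of_mem_antidiagonal ha (mem_product.mp hQ).2
    simp [h₁, h₂]
  · rintro ⟨P₁, P₂⟩ -
    simp only [single_add_erase]

end Finsupp

/-- The convolution identity underlying formula (5.10) of the paper
(`β ∗ 𝔏₁ = q^{g-1} 𝔏₀`): convolving Schieder's function `r` with `𝔏₁` gives
`𝔏₀`.  For `D : S →₀ ℕ` set `r(D) = ∏_{x ∈ supp D} (1 - q x)` and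
`w(D) = ∏_{x ∈ supp D} q x ^ D x`; then
`Σ_{D₁ + D₂ = D} r(D₁) w(D₂) = 1` for every `D`. -/
theorem stmt_17 {S : Type*} [DecidableEq S] {R : Type*} [CommRing R] (q : S → R)
    (D : S →₀ ℕ) :
    ∑ P ∈ Finset.HasAntidiagonal.antidiagonal D,
        (∏ x ∈ P.1.support, (1 - q x)) *
          (∏ x ∈ P.2.support, q x ^ P.2 x)
      = 1 := by
  induction D using Finsupp.induction with
  | zero => simp
  | single_add a n f ha _ ih =>
    have hfa : f a = 0 := notMem_support_iff.mp ha
    calc _ = (∑ p ∈ antidiagonal n, (if p.1 = 0 then 1 else 1 - q a) * q a ^ p.2) *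
          ∑ P ∈ antidiagonal f,
            (∏ x ∈ P.1.support, (1 - q x)) * ∏ x ∈ P.2.support, q x ^ P.2 x := by
          rw [sum_antidiagonal_single_add _ hfa, sum_mul_sum]
          refine sum_congr rfl fun p _ => sum_congr rfl fun P hP => ?_
          rw [prod_support_single_add _ (apply_eq_zero_of_mem_antidiagonal hfa hP).1,
            prod_support_pow_single_add]
          ring
      _ = 1 := by rw [Nat.sum_antidiagonal_ite_one_sub_mul_pow, ih, one_mul]
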